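/- arXiv:0809.4601 — 4 statements merged into one kernel-verified Lean document; each statement's English description precedes it below -/
import Mathlib

section
/- Let x_1, …, x_m ∈ [−M, M] be real numbers, C_1, …, C_m nonnegative definite p×p Hermitian matrices with Σ_j C_j = I_p, and z ∈ ℂ with |z| > M. Then for every nonzero v ∈ ℂ^p, |v* (Σ_j C_j/(z − x_j)) v| > (v*v)/(2|z|). -/
open Matrix
open scoped ComplexOrder

/-!
With `rⱼ = v* Cⱼ v ≥ 0`, which sum to `v* v`, the quadratic form is the scalar resolvent sum
`∑ rⱼ / (z - xⱼ)`. As `Re (z / (z - xⱼ)) > 1/2` for `|xⱼ| < |z|`, multiplying that sum by `z` gives a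
number of real part above `v* v / 2`, and `|z S| ≤ |z| |S|` gives the bound.
-/

/-- For `‖w‖ < ‖z‖`, `z / (z - w) - 1/2 = (z + w) / (2 (z - w))`, whose real part is
`(‖z‖² - ‖w‖²) / (2 ‖z - w‖²) > 0`. -/
lemma Complex.half_lt_re_div_sub {z w : ℂ} (hw : ‖w‖ < ‖z‖) : 1 / 2 < (z / (z - w)).re := by
  have hzw : z - w ≠ 0 := sub_ne_zero.mpr fun h => (h ▸ hw).false
  have hnormSq : Complex.normSq w < Complex.normSq z := by
    rw [← Complex.sq_norm, ← Complex.sq_norm]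
    exact pow_lt_pow_left₀ hw (norm_nonneg w) two_ne_zero
  rw [Complex.div_re, ← add_div, lt_div_iff₀ (Complex.normSq_pos.mpr hzw)]
  simp only [Complex.normSq_apply, Complex.sub_re, Complex.sub_im] at hnormSq ⊢
  linarith

lemma Complex.div_two_le_re_mul_inv_sub_mul {z w : ℂ} (hw : ‖w‖ < ‖z‖) {r : ℝ} (hr : 0 ≤ r) :
    r / 2 ≤ (z * ((z - w)⁻¹ * r)).re := by
  rw [← mul_assoc, ← div_eq_mul_inv, Complex.re_mul_ofReal]
  nlinarith [half_lt_re_div_sub hw]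

lemma Complex.div_two_lt_re_mul_inv_sub_mul {z w : ℂ} (hw : ‖w‖ < ‖z‖) {r : ℝ} (hr : 0 < r) :
    r / 2 < (z * ((z - w)⁻¹ * r)).re := by
  rw [← mul_assoc, ← div_eq_mul_inv, Complex.re_mul_ofReal]
  nlinarith [half_lt_re_div_sub hw]

lemma Complex.sum_div_two_mul_norm_lt_norm_sum_inv_sub_mul {ι : Type*} {s : Finset ι} {z : ℂ}
    {w : ι → ℂ} (hw : ∀ j ∈ s, ‖w j‖ < ‖z‖) {r : ι → ℝ} (hr : ∀ j ∈ s, 0 ≤ r j)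
    (hsum : 0 < ∑ j ∈ s, r j) :
    (∑ j ∈ s, r j) / (2 * ‖z‖) < ‖∑ j ∈ s, (z - w j)⁻¹ * r j‖ := by
  obtain ⟨j₀, hj₀, hrj₀⟩ := Finset.exists_lt_of_sum_lt (Finset.sum_const_zero.trans_lt hsum)
  have hre : (∑ j ∈ s, r j) / 2 < (z * ∑ j ∈ s, (z - w j)⁻¹ * r j).re := by
    rw [Finset.mul_sum, Complex.re_sum, Finset.sum_div]
    exact Finset.sum_lt_sum (fun j hj => div_two_le_re_mul_inv_sub_mul (hw j hj) (hr j hj))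
      ⟨j₀, hj₀, div_two_lt_re_mul_inv_sub_mul (hw j₀ hj₀) hrj₀⟩
  have hnorm := hre.trans_le (Complex.re_le_norm _)
  rw [norm_mul] at hnorm
  have hz : 0 < ‖z‖ := pos_of_mul_pos_left (hnorm.trans' (by positivity)) (norm_nonneg _)
  rw [div_lt_iff₀ (by positivity)]
  linarith

lemma Matrix.PosSemidef.ofReal_re_dotProduct_mulVec {n : Type*} [Fintype n]
    {A : Matrix n n ℂ} (hA : A.PosSemidef) (v : n → ℂ) :
    ((star v ⬝ᵥ (A *ᵥ v)).re : ℂ) = star v ⬝ᵥ (A *ᵥ v) :=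
  (Complex.eq_re_of_ofReal_le (r := 0) (by simpa using hA.dotProduct_mulVec_nonneg v)).symm

lemma Matrix.dotProduct_sum_smul_mulVec {ι n R : Type*} [Fintype n] [CommSemiring R]
    (s : Finset ι) (a : ι → R) (A : ι → Matrix n n R) (u v : n → R) :
    u ⬝ᵥ ((∑ j ∈ s, a j • A j) *ᵥ v) = ∑ j ∈ s, a j * u ⬝ᵥ (A j *ᵥ v) := by
  simp only [Matrix.sum_mulVec, dotProduct_sum, Matrix.smul_mulVec, dotProduct_smul,
    smul_eq_mul]

theorem quadratic_form_resolvent_lower_bound_general (p m : ℕ) (M : ℝ)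
    (x : Fin m → ℝ) (hx : ∀ j, x j ∈ Set.Icc (-M) M)
    (C : Fin m → Matrix (Fin p) (Fin p) ℂ)
    (hC : ∀ j, (C j).PosSemidef)
    (hsum : ∑ j, C j = 1)
    (z : ℂ) (hz : M < ‖z‖) :
    ∀ v : Fin p → ℂ, v ≠ 0 →
      ‖star v ⬝ᵥ v‖ / (2 * ‖z‖) <
        ‖star v ⬝ᵥ ((∑ j, (z - (x j : ℂ))⁻¹ • C j) *ᵥ v)‖ := by
  intro v hv
  set r : Fin m → ℝ := fun j => (star v ⬝ᵥ (C j *ᵥ v)).re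
  have hr : ∀ j, (r j : ℂ) = star v ⬝ᵥ (C j *ᵥ v) := fun j =>
    (hC j).ofReal_re_dotProduct_mulVec v
  have hself : star v ⬝ᵥ v = ((∑ j, r j : ℝ) : ℂ) := by
    simpa [hsum, hr] using Matrix.dotProduct_sum_smul_mulVec Finset.univ 1 C (star v) v
  have hpos : 0 < ∑ j, r j :=
    Complex.zero_lt_real.mp (hself ▸ Matrix.dotProduct_star_self_pos_iff.mpr hv)
  rw [Matrix.dotProduct_sum_smul_mulVec, hself, Complex.norm_real, Real.norm_of_nonneg hpos.le]
  simp only [← hr]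
  refine Complex.sum_div_two_mul_norm_lt_norm_sum_inv_sub_mul (fun j _ => ?_)
    (fun j _ => Complex.zero_le_real.mp ((hr j).symm ▸ (hC j).dotProduct_mulVec_nonneg v)) hpos
  rw [Complex.norm_real, Real.norm_eq_abs]
  exact (abs_le.mpr (hx j)).trans_lt hz

theorem quadratic_form_resolvent_lower_bound (p m : ℕ) (M : ℝ) (hM : 0 < M)
    (x : Fin m → ℝ) (hx : ∀ j, x j ∈ Set.Icc (-M) M)
    (C : Fin m → Matrix (Fin p) (Fin p) ℂ)
    (hC : ∀ j, (C j).PosSemidef)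
    (hsum : ∑ j, C j = 1)
    (z : ℂ) (hz : M < ‖z‖) :
    ∀ v : Fin p → ℂ, v ≠ 0 →
      ‖star v ⬝ᵥ v‖ / (2 * ‖z‖) <
        ‖star v ⬝ᵥ ((∑ j, (z - (x j : ℂ))⁻¹ • C j) *ᵥ v)‖ :=
  quadratic_form_resolvent_lower_bound_general p m M x hx C hC hsum z hz
end

section
/- Let X be a chi-distributed random variable with k degrees of freedom (i.e., X² ~ χ²_k). Then for every ε > 0, P(|X − √k| ≥ ε) ≤ 2·exp(−ε²/2). -/
/-!
For `t < 1/2` the moment generating function of `S = ∑ Zᵢ²` is `(1 - 2t)^(-k/2)`. Chernoff's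
bound at level `c²`, with the optimal parameter `t = (1 - k/c²)/2`, bounds `P(S ≥ c²)` for
`c ≥ √k` and `P(S ≤ c²)` for `c ≤ √k` by `exp(-(c² - k)/2) (c/√k)^k`, and `x ≤ exp(x - 1)`
turns this into `exp(-(c - √k)²/2)`. Taking `c = √k ± ε` bounds the two tails of `X = √S`; when
`ε ≥ √k` the lower tail lies in the null event `{Z₁ = 0}`.
-/

open MeasureTheory ProbabilityTheory Real

lemma integral_exp_mul_sq_gaussianReal {t : ℝ} (ht : t < 1 / 2) :
    ∫ x, exp (t * x ^ 2) ∂gaussianReal 0 1 = (√(1 - 2 * t))⁻¹ := by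
  have hdensity (x : ℝ) : gaussianPDFReal 0 1 x • exp (t * x ^ 2)
      = (√(2 * π))⁻¹ * exp (-(1 / 2 - t) * x ^ 2) := by
    simp only [gaussianPDFReal, NNReal.coe_one, mul_one, sub_zero, smul_eq_mul]
    rw [mul_assoc, ← exp_add]
    ring_nf
  simp_rw [integral_gaussianReal_eq_integral_smul one_ne_zero, hdensity, integral_const_mul,
    integral_gaussian]
  rw [← sqrt_inv, ← sqrt_mul (by positivity), ← sqrt_inv]
  have : 1 / 2 - t ≠ 0 := by linarith
  field_simp

lemma mgf_sq_of_map_eq_gaussianReal {Ω : Type*} [MeasurableSpace Ω] {μ : Measure Ω}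
    {Y : Ω → ℝ} (hY : AEMeasurable Y μ) (hdist : μ.map Y = gaussianReal 0 1) {t : ℝ}
    (ht : t < 1 / 2) :
    mgf (fun ω ↦ Y ω ^ 2) μ t = (√(1 - 2 * t))⁻¹ := by
  rw [← integral_exp_mul_sq_gaussianReal ht, ← hdist, integral_map hY (by fun_prop), mgf]

lemma exp_neg_sq_sub_div_two_mul_div_sqrt_pow_le (k : ℕ) {c : ℝ} (hc : 0 ≤ c) :
    exp (-(c ^ 2 - k) / 2) * (c / √k) ^ k ≤ exp (-(c - √k) ^ 2 / 2) := by
  have hbase : c / √k ≤ exp (c / √k - 1) := by linarith [add_one_le_exp (c / √k - 1)]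
  calc exp (-(c ^ 2 - k) / 2) * (c / √k) ^ k
      ≤ exp (-(c ^ 2 - k) / 2) * exp (c / √k - 1) ^ k := by gcongr
    _ = exp (-(c - √k) ^ 2 / 2) := by
      rw [← exp_nat_mul, ← exp_add, mul_sub, mul_div_assoc', mul_comm, mul_div_assoc, div_sqrt]
      congr 1
      linear_combination (1 / 2 : ℝ) * sq_sqrt (Nat.cast_nonneg (α := ℝ) k)

section SumOfSquares

variable {Ω ι : Type*} [MeasurableSpace Ω] {μ : Measure Ω} [Fintype ι] {Z : ι → Ω → ℝ}

lemma mgf_sum_sq_of_iIndepFun_gaussian (hmeas : ∀ i, Measurable (Z i))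
    (hindep : iIndepFun Z μ) (hdist : ∀ i, μ.map (Z i) = gaussianReal 0 1) {t : ℝ}
    (ht : t < 1 / 2) :
    mgf (fun ω ↦ ∑ i, Z i ω ^ 2) μ t = (√(1 - 2 * t))⁻¹ ^ Fintype.card ι := by
  have hsq : iIndepFun (fun i ω ↦ Z i ω ^ 2) μ :=
    hindep.comp (fun _ x ↦ x ^ 2) (fun _ ↦ by fun_prop)
  have hprod := hsq.mgf_sum (fun i ↦ (hmeas i).pow_const 2) Finset.univ (t := t)
  simp only [Finset.sum_fn] at hprod
  simp [hprod, mgf_sq_of_map_eq_gaussianReal (hmeas _).aemeasurable (hdist _) ht]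

lemma integrable_exp_mul_sum_sq [IsProbabilityMeasure μ] (hmeas : ∀ i, Measurable (Z i))
    (hindep : iIndepFun Z μ) (hdist : ∀ i, μ.map (Z i) = gaussianReal 0 1) {t : ℝ}
    (ht : t < 1 / 2) :
    Integrable (fun ω ↦ exp (t * ∑ i, Z i ω ^ 2)) μ := by
  rw [← mgf_pos_iff, mgf_sum_sq_of_iIndepFun_gaussian hmeas hindep hdist ht]
  have : 0 < 1 - 2 * t := by linarith
  positivity

lemma exp_neg_mul_mgf_sum_sq_le [Nonempty ι] (hmeas : ∀ i, Measurable (Z i))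
    (hindep : iIndepFun Z μ) (hdist : ∀ i, μ.map (Z i) = gaussianReal 0 1) {c : ℝ}
    (hc : 0 < c) :
    exp (-((1 - Fintype.card ι / c ^ 2) / 2) * c ^ 2)
        * mgf (fun ω ↦ ∑ i, Z i ω ^ 2) μ ((1 - Fintype.card ι / c ^ 2) / 2)
      ≤ exp (-(c - √(Fintype.card ι)) ^ 2 / 2) := by
  set k := Fintype.card ι
  have hk : (0 : ℝ) < k := by exact_mod_cast Fintype.card_pos
  have ht : (1 - k / c ^ 2) / 2 < 1 / 2 := by have := div_pos hk (pow_pos hc 2); linarith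
  have hroot : 1 - 2 * ((1 - k / c ^ 2) / 2) = (√k / c) ^ 2 := by
    rw [div_pow, sq_sqrt hk.le]; ring
  rw [mgf_sum_sq_of_iIndepFun_gaussian hmeas hindep hdist ht, hroot, sqrt_sq (by positivity),
    inv_div]
  convert exp_neg_sq_sub_div_two_mul_div_sqrt_pow_le k hc.le using 3
  field_simp

lemma measureReal_sq_le_sum_sq_le [IsProbabilityMeasure μ] [Nonempty ι]
    (hmeas : ∀ i, Measurable (Z i)) (hindep : iIndepFun Z μ)
    (hdist : ∀ i, μ.map (Z i) = gaussianReal 0 1) {c : ℝ} (hc : √(Fintype.card ι) ≤ c) :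
    μ.real {ω | c ^ 2 ≤ ∑ i, Z i ω ^ 2} ≤ exp (-(c - √(Fintype.card ι)) ^ 2 / 2) := by
  set k := Fintype.card ι
  have hk : (0 : ℝ) < k := by exact_mod_cast Fintype.card_pos
  have hc0 : 0 < c := (sqrt_pos.2 hk).trans_le hc
  have ht : (1 - k / c ^ 2) / 2 < 1 / 2 := by have := div_pos hk (pow_pos hc0 2); linarith
  have ht0 : 0 ≤ (1 - k / c ^ 2) / 2 := by
    have := (div_le_one (pow_pos hc0 2)).2 ((sqrt_le_left hc0.le).1 hc)
    linarith
  exact (measure_ge_le_exp_mul_mgf _ ht0 (integrable_exp_mul_sum_sq hmeas hindep hdist ht)).trans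
    (exp_neg_mul_mgf_sum_sq_le hmeas hindep hdist hc0)

lemma measureReal_sum_sq_le_sq_le [IsProbabilityMeasure μ] [Nonempty ι]
    (hmeas : ∀ i, Measurable (Z i)) (hindep : iIndepFun Z μ)
    (hdist : ∀ i, μ.map (Z i) = gaussianReal 0 1) {c : ℝ} (hc0 : 0 < c)
    (hc : c ≤ √(Fintype.card ι)) :
    μ.real {ω | ∑ i, Z i ω ^ 2 ≤ c ^ 2} ≤ exp (-(c - √(Fintype.card ι)) ^ 2 / 2) := by
  set k := Fintype.card ι
  have hk : (0 : ℝ) < k := by exact_mod_cast Fintype.card_pos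
  have ht : (1 - k / c ^ 2) / 2 < 1 / 2 := by have := div_pos hk (pow_pos hc0 2); linarith
  have ht0 : (1 - k / c ^ 2) / 2 ≤ 0 := by
    have := (one_le_div (pow_pos hc0 2)).2 ((le_sqrt hc0.le hk.le).1 hc)
    linarith
  exact (measure_le_le_exp_mul_mgf _ ht0 (integrable_exp_mul_sum_sq hmeas hindep hdist ht)).trans
    (exp_neg_mul_mgf_sum_sq_le hmeas hindep hdist hc0)

lemma measure_sum_sq_nonpos_eq_zero [Nonempty ι] (hmeas : ∀ i, Measurable (Z i))
    (hdist : ∀ i, μ.map (Z i) = gaussianReal 0 1) : μ {ω | ∑ i, Z i ω ^ 2 ≤ 0} = 0 := by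
  obtain ⟨i⟩ := ‹Nonempty ι›
  have := nullSingletonClass_gaussianReal (μ := 0) one_ne_zero
  refine measure_mono_null (t := Z i ⁻¹' {0}) (fun ω hω ↦ ?_) ?_
  · have hterm : Z i ω ^ 2 ≤ ∑ j, Z j ω ^ 2 :=
      Finset.single_le_sum (fun j _ ↦ sq_nonneg (Z j ω)) (Finset.mem_univ i)
    exact (pow_eq_zero_iff two_ne_zero).1 (le_antisymm (hterm.trans hω) (sq_nonneg _))
  · rw [← Measure.map_apply (hmeas i) (measurableSet_singleton 0), hdist i, measure_singleton]

lemma measureReal_sqrt_add_le_sqrt_sum_sq_le [IsProbabilityMeasure μ] [Nonempty ι]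
    (hmeas : ∀ i, Measurable (Z i)) (hindep : iIndepFun Z μ)
    (hdist : ∀ i, μ.map (Z i) = gaussianReal 0 1) {ε : ℝ} (hε : 0 ≤ ε) :
    μ.real {ω | √(Fintype.card ι) + ε ≤ √(∑ i, Z i ω ^ 2)} ≤ exp (-ε ^ 2 / 2) := by
  have hsets : {ω | √(Fintype.card ι) + ε ≤ √(∑ i, Z i ω ^ 2)}
      = {ω | (√(Fintype.card ι) + ε) ^ 2 ≤ ∑ i, Z i ω ^ 2} := by
    ext ω
    exact le_sqrt (by positivity) (Finset.sum_nonneg fun i _ ↦ sq_nonneg (Z i ω))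
  simpa [hsets] using
    measureReal_sq_le_sum_sq_le hmeas hindep hdist (c := √(Fintype.card ι) + ε) (by linarith)

lemma measureReal_sqrt_sum_sq_le_sqrt_sub_le [IsProbabilityMeasure μ] [Nonempty ι]
    (hmeas : ∀ i, Measurable (Z i)) (hindep : iIndepFun Z μ)
    (hdist : ∀ i, μ.map (Z i) = gaussianReal 0 1) {ε : ℝ} (hε : 0 ≤ ε) :
    μ.real {ω | √(∑ i, Z i ω ^ 2) ≤ √(Fintype.card ι) - ε} ≤ exp (-ε ^ 2 / 2) := by
  rcases lt_or_ge ε √(Fintype.card ι) with hεk | hεk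
  · have hsets : {ω | √(∑ i, Z i ω ^ 2) ≤ √(Fintype.card ι) - ε}
        = {ω | ∑ i, Z i ω ^ 2 ≤ (√(Fintype.card ι) - ε) ^ 2} := by
      ext ω
      exact sqrt_le_left (by linarith)
    simpa [hsets] using measureReal_sum_sq_le_sq_le hmeas hindep hdist
      (c := √(Fintype.card ι) - ε) (by linarith) (by linarith)
  · refine le_of_eq_of_le ?_ (exp_nonneg _)
    rw [measureReal_eq_zero_iff]
    refine measure_mono_null (fun ω hω ↦ ?_) (measure_sum_sq_nonpos_eq_zero hmeas hdist)
    exact sqrt_eq_zero'.1 (le_antisymm (hω.trans (by simpa using hεk)) (sqrt_nonneg _))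

end SumOfSquares

theorem chi_concentration_around_sqrt_k
    {Ω : Type*} [MeasurableSpace Ω] (μ : Measure Ω) [IsProbabilityMeasure μ]
    (k : ℕ) (Z : Fin k → Ω → ℝ)
    (hmeas : ∀ i, Measurable (Z i))
    (hindep : iIndepFun Z μ)
    (hdist : ∀ i, Measure.map (Z i) μ = gaussianReal 0 1)
    (X : Ω → ℝ) (hX : ∀ ω, X ω = Real.sqrt (∑ i, (Z i ω) ^ 2))
    (ε : ℝ) (hε : 0 < ε) :
    μ {ω | ε ≤ |X ω - Real.sqrt k|} ≤ ENNReal.ofReal (2 * Real.exp (-ε ^ 2 / 2)) := by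
  rcases k.eq_zero_or_pos with rfl | hk
  · simp [hX, hε.not_ge]
  have : Nonempty (Fin k) := ⟨⟨0, hk⟩⟩
  obtain rfl : X = fun ω ↦ √(∑ i, Z i ω ^ 2) := funext hX
  have hsplit : {ω | ε ≤ |√(∑ i, Z i ω ^ 2) - √k|}
      ⊆ {ω | √k + ε ≤ √(∑ i, Z i ω ^ 2)} ∪ {ω | √(∑ i, Z i ω ^ 2) ≤ √k - ε} := by
    intro ω (hω : ε ≤ _)
    exact (le_abs.1 hω).imp (fun h ↦ Set.mem_ofPred.2 (by linarith))
      (fun h ↦ Set.mem_ofPred.2 (by linarith))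
  rw [ENNReal.le_ofReal_iff_toReal_le (measure_ne_top _ _) (by positivity)]
  calc μ.real {ω | ε ≤ |√(∑ i, Z i ω ^ 2) - √k|}
      ≤ μ.real {ω | √k + ε ≤ √(∑ i, Z i ω ^ 2)}
          + μ.real {ω | √(∑ i, Z i ω ^ 2) ≤ √k - ε} :=
        (measureReal_mono hsplit).trans (measureReal_union_le _ _)
    _ ≤ exp (-ε ^ 2 / 2) + exp (-ε ^ 2 / 2) := by
        gcongr
        · simpa using measureReal_sqrt_add_le_sqrt_sum_sq_le hmeas hindep hdist hε.le
        · simpa using measureReal_sqrt_sum_sq_le_sqrt_sub_le hmeas hindep hdist hε.le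
    _ = 2 * exp (-ε ^ 2 / 2) := by ring
end

section
/- Let λ_1 ≤ … ≤ λ_n and x_1 ≤ … ≤ x_n be real numbers, and let F and G be the empirical distribution functions of {λ_j} and {x_j} respectively. Then the Lévy distance L(F, G) satisfies L(F, G)³ ≤ (1/n)·Σ_{j=1}^n (λ_j − x_j)². -/
/-!
If `F (t - ε) - ε > G t`, then more than `n ε` indices `j` have `λ_j ≤ t - ε` but `x_j > t`, and
each of them contributes more than `ε²` to `∑ (λ_j - x_j)²`. So every `ε > 0` with
`ε³ ≥ (1/n) ∑ (λ_j - x_j)²` is admissible in the definition of the Lévy distance, and symmetrically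
for the other inequality.
-/

/-- The empirical distribution function of the points `y 0, …, y (n-1)`. -/
noncomputable def empCDF (n : ℕ) (y : Fin n → ℝ) (t : ℝ) : ℝ :=
  ((Finset.univ.filter fun j => y j ≤ t).card : ℝ) / n

/-- The Lévy distance between two distribution functions. -/
noncomputable def levyDist (F G : ℝ → ℝ) : ℝ :=
  sInf {ε : ℝ | 0 < ε ∧ ∀ x, F (x - ε) - ε ≤ G x ∧ G x ≤ F (x + ε) + ε}

open Finset

theorem card_filter_sub_card_filter_mul_sq_le {ι : Type*} [Fintype ι] [DecidableEq ι]
    (f g : ι → ℝ) {s δ : ℝ} (hδ : 0 ≤ δ) :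
    ((#{j | f j ≤ s} : ℝ) - #{j | g j ≤ s + δ}) * δ ^ 2 ≤ ∑ j, (f j - g j) ^ 2 := by
  set A : Finset ι := {j | f j ≤ s}
  set B : Finset ι := {j | g j ≤ s + δ}
  have hcard : (#A : ℝ) - #B ≤ #(A \ B) := by
    rw [sub_le_iff_le_add]
    exact_mod_cast card_le_card_sdiff_add_card
  have hgap : ∀ j ∈ A \ B, δ ^ 2 ≤ (f j - g j) ^ 2 := by
    intro j hj
    simp only [A, B, mem_sdiff, mem_filter, mem_univ, true_and, not_le] at hj
    nlinarith
  calc ((#A : ℝ) - #B) * δ ^ 2 ≤ #(A \ B) * δ ^ 2 := by gcongr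
    _ ≤ ∑ j ∈ A \ B, (f j - g j) ^ 2 := by
      simpa only [nsmul_eq_mul] using card_nsmul_le_sum _ _ _ hgap
    _ ≤ ∑ j, (f j - g j) ^ 2 :=
      sum_le_sum_of_subset_of_nonneg (subset_univ _) fun j _ _ => sq_nonneg _

theorem empCDF_sub_le_of_mean_sq_le {n : ℕ} (f g : Fin n → ℝ) {ε : ℝ} (hε : 0 < ε)
    (h : (1 / n : ℝ) * ∑ j, (f j - g j) ^ 2 ≤ ε ^ 3) (t : ℝ) :
    empCDF n f (t - ε) - ε ≤ empCDF n g t := by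
  rcases n.eq_zero_or_pos with rfl | hn
  · simp [empCDF, hε.le]
  have hn' : (0 : ℝ) < n := by exact_mod_cast hn
  have hcount := card_filter_sub_card_filter_mul_sq_le f g (s := t - ε) hε.le
  rw [sub_add_cancel] at hcount
  rw [one_div, inv_mul_le_iff₀ hn'] at h
  have hle : (#{j | f j ≤ t - ε} : ℝ) - #{j | g j ≤ t} ≤ n * ε := by
    nlinarith [pow_pos hε 2]
  unfold empCDF
  rw [sub_le_iff_le_add, div_le_iff₀ hn', add_mul, div_mul_cancel₀ _ hn'.ne']
  linarith

theorem levyDist_nonneg (F G : ℝ → ℝ) : 0 ≤ levyDist F G :=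
  Real.sInf_nonneg fun _ hε => hε.1.le

theorem levyDist_le_of_forall_lt {F G : ℝ → ℝ} {δ : ℝ} (hδ : 0 ≤ δ)
    (h : ∀ ε, δ < ε → ∀ x, F (x - ε) - ε ≤ G x ∧ G x ≤ F (x + ε) + ε) :
    levyDist F G ≤ δ :=
  le_of_forall_gt_imp_ge_of_dense fun ε hε =>
    csInf_le ⟨0, fun _ hε' => hε'.1.le⟩ ⟨hδ.trans_lt hε, h ε hε⟩

theorem levy_dist_cubed_le_mean_square_general (n : ℕ)
    (lam x : Fin n → ℝ) :
    levyDist (empCDF n lam) (empCDF n x) ^ 3 ≤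
      (1 / n : ℝ) * ∑ j, (lam j - x j) ^ 2 := by
  set D := (1 / n : ℝ) * ∑ j, (lam j - x j) ^ 2
  have hD : 0 ≤ D := by positivity
  set δ := D ^ (3⁻¹ : ℝ)
  have hδ3 : δ ^ 3 = D := Real.rpow_inv_natCast_pow (n := 3) hD (by norm_num)
  have hsymm : (1 / n : ℝ) * ∑ j, (x j - lam j) ^ 2 = D := by
    simp only [D, sub_sq_comm]
  have hL : levyDist (empCDF n lam) (empCDF n x) ≤ δ := by
    refine levyDist_le_of_forall_lt (by positivity) fun ε hε t => ?_
    have hε0 : 0 < ε := lt_of_le_of_lt (by positivity) hε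
    have hDε : D ≤ ε ^ 3 := hδ3 ▸ pow_le_pow_left₀ (by positivity) hε.le 3
    refine ⟨empCDF_sub_le_of_mean_sq_le lam x hε0 hDε t, ?_⟩
    have := empCDF_sub_le_of_mean_sq_le x lam hε0 (hsymm ▸ hDε) (t + ε)
    rwa [add_sub_cancel_right, sub_le_iff_le_add] at this
  calc levyDist (empCDF n lam) (empCDF n x) ^ 3 ≤ δ ^ 3 :=
        pow_le_pow_left₀ (levyDist_nonneg _ _) hL 3
    _ = D := hδ3

theorem levy_dist_cubed_le_mean_square (n : ℕ) (hn : 0 < n)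
    (lam x : Fin n → ℝ) (hlam : Monotone lam) (hx : Monotone x) :
    levyDist (empCDF n lam) (empCDF n x) ^ 3 ≤
      (1 / n : ℝ) * ∑ j, (lam j - x j) ^ 2 :=
  levy_dist_cubed_le_mean_square_general n lam x
end

section
/- Let K(z) = U(z)D(z)U(z)^{-1} where U(z) is a differentiable family of invertible p×p matrices and D(z) = diag(λ_1(z), …, λ_p(z)) is a differentiable diagonal matrix family. If K'(z) = −(1/2)(M(z)·K(z) + K(z)·M(z)) for some matrix family M(z), then the diagonal entries of U^{-1}(z) M(z) U(z) satisfy [U^{-1} M U]_{jj}(z) = −λ_j'(z)/λ_j(z), provided λ_j(z) ≠ 0. -/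
open Matrix

/-! Conjugating the product rule for `K = U D U⁻¹` back by `U` turns `K'` into
`[U⁻¹ U', D] + D'`, and the hypothesis into `[U⁻¹ U', D] + D' = -½ (N D + D N)` with
`N = U⁻¹ M U`. Commutators with a diagonal matrix vanish on the diagonal, so the `(j, j)`
entry reads `λⱼ' = -N_jj λⱼ`. -/

namespace Matrix

variable {n R : Type*} [Fintype n] [DecidableEq n] [CommRing R]

theorem commutator_diagonal_apply_self (A : Matrix n n R) (d : n → R) (i : n) :
    (A * diagonal d - diagonal d * A) i i = 0 := by
  simp only [sub_apply, mul_diagonal, diagonal_mul, mul_comm, sub_self]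

theorem anticommutator_diagonal_apply_self (A : Matrix n n R) (d : n → R) (i : n) :
    (A * diagonal d + diagonal d * A) i i = 2 * (A i i * d i) := by
  simp only [add_apply, mul_diagonal, diagonal_mul]
  ring

theorem nonsing_inv_mul_conj_deriv_mul {U : Matrix n n R} (hU : IsUnit U.det)
    (U' D D' : Matrix n n R) :
    U⁻¹ * (U' * D * U⁻¹ + U * D' * U⁻¹ + U * D * (-(U⁻¹ * U' * U⁻¹))) * U =
      (U⁻¹ * U' * D - D * (U⁻¹ * U')) + D' := by
  simp only [Matrix.mul_add, Matrix.add_mul, Matrix.mul_neg, Matrix.neg_mul, Matrix.mul_assoc,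
    U.nonsing_inv_mul_cancel_left _ hU, U.nonsing_inv_mul hU, Matrix.mul_one]
  abel

theorem nonsing_inv_mul_anticommutator_conj_mul {U : Matrix n n R} (hU : IsUnit U.det)
    (M D : Matrix n n R) :
    U⁻¹ * (M * (U * D * U⁻¹) + U * D * U⁻¹ * M) * U =
      U⁻¹ * M * U * D + D * (U⁻¹ * M * U) := by
  simp only [Matrix.mul_add, Matrix.add_mul, Matrix.mul_assoc,
    U.nonsing_inv_mul_cancel_left _ hU, U.nonsing_inv_mul hU, Matrix.mul_one]

end Matrix

theorem diag_conjugated_logderiv (p : ℕ)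
    (U U' M : Matrix (Fin p) (Fin p) ℂ) (lam lam' : Fin p → ℂ)
    (hU : IsUnit U.det)
    (hK' : U' * diagonal lam * U⁻¹ + U * diagonal lam' * U⁻¹ +
        U * diagonal lam * (-(U⁻¹ * U' * U⁻¹)) =
      -(1 / 2 : ℂ) • (M * (U * diagonal lam * U⁻¹) +
        (U * diagonal lam * U⁻¹) * M)) :
    ∀ j, lam j ≠ 0 → (U⁻¹ * M * U) j j = -lam' j / lam j := by
  intro j hj
  have hconj := congrArg (fun X => U⁻¹ * X * U) hK'
  simp only [Matrix.mul_smul, Matrix.smul_mul, nonsing_inv_mul_conj_deriv_mul hU,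
    nonsing_inv_mul_anticommutator_conj_mul hU] at hconj
  have hjj := congrFun (congrFun hconj j) j
  rw [Matrix.add_apply, commutator_diagonal_apply_self, diagonal_apply_eq, Matrix.smul_apply,
    anticommutator_diagonal_apply_self, smul_eq_mul] at hjj
  rw [eq_div_iff hj]
  linear_combination hjj
end
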